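/- The sequence m ↦ g_m(√(m-1)) = (2^{(2-m)/2}/Γ(m/2))·(m-1)^{(m-1)/2}·e^{-(m-1)/2} is monotone decreasing in m and converges to 1/√π as m → ∞. -/

import Mathlib

/-!
Write `ε n = log (stirlingSeq n) - log √π`, so that `log n! = n log n - n + log (2πn) / 2 + ε n`.
From `Γ(k) = (k - 1)!` and Legendre's duplication formula for `Γ(k + 1/2)` one gets
`log g_{2k} = -log π / 2 + 1/2 - (k - 1/2) log (1 + 1/(2k - 1)) - ε k` and
`log g_{2k+1} = -log π / 2 + ε k - ε (2k)`.
Robbins' bounds `1/(12n + 1) ≤ ε n ≤ 1/(12n)` (the remainder minus either bound is monotone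
and tends to `0`) and the first two terms of `log (1 + 1/a) = 2 artanh (1/(2a + 1))` reduce
each step `g_{m+1} ≤ g_m` to a polynomial inequality in `k`, and give
`|log g_m + log π / 2| ≤ 1/m`.
-/

open Real Filter

/-- The maximal value `g_m(√(m-1))` of the radial density of the `m`-dimensional
standard Gaussian measure. -/
noncomputable def gaussRadialMax (m : ℕ) : ℝ :=
  (2 : ℝ) ^ ((2 - (m : ℝ)) / 2) / Real.Gamma ((m : ℝ) / 2) *
    ((m : ℝ) - 1) ^ (((m : ℝ) - 1) / 2) * Real.exp (-((m : ℝ) - 1) / 2)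

open Topology Stirling
open scoped Nat

theorem le_log_one_add_inv {a : ℝ} (ha : 0 < a) :
    2 / (2 * a + 1) + 2 / (3 * (2 * a + 1) ^ 3) ≤ log (1 + a⁻¹) := by
  refine le_of_eq_of_le ?_
    (sum_le_hasSum (Finset.range 2) (fun _ _ ↦ by positivity) (hasSum_log_one_add_inv ha))
  norm_num [Finset.sum_range_succ]
  field_simp

theorem log_one_add_inv_le {a : ℝ} (ha : 0 < a) :
    log (1 + a⁻¹) ≤ 2 / (2 * a + 1) + 1 / (6 * a * (a + 1) * (2 * a + 1)) := by
  have series := hasSum_log_one_add_inv ha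
  set y := 1 / (2 * a + 1) with hy
  have hy2 : 1 - y ^ 2 = 4 * a * (a + 1) / (2 * a + 1) ^ 2 := by rw [hy]; field_simp; ring
  have geom := hasSum_geometric_of_lt_one (by positivity)
    (show y ^ 2 < 1 by nlinarith [show 0 < 4 * a * (a + 1) / (2 * a + 1) ^ 2 by positivity])
  -- past the first term, `1 / (2j + 1) ≤ 1/3` turns the series into a geometric one
  have tail_le := hasSum_le (fun j ↦ ?_) ((hasSum_nat_add_iff' 1).mpr series)
    (geom.mul_left (2 / 3 * y ^ 3))
  · rw [hy2, hy] at tail_le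
    norm_num at tail_le
    refine tail_le.trans_eq ?_
    field_simp
    ring
  · have hc : 2 * (1 / (2 * ((j + 1 : ℕ) : ℝ) + 1)) ≤ 2 / 3 := by
      rw [mul_one_div, div_le_div_iff_of_pos_left (by norm_num) (by positivity) (by norm_num)]
      push_cast
      linarith [j.cast_nonneg (α := ℝ)]
    calc _ = 2 * (1 / (2 * ((j + 1 : ℕ) : ℝ) + 1)) * (y ^ 3 * (y ^ 2) ^ j) := by ring
      _ ≤ 2 / 3 * (y ^ 3 * (y ^ 2) ^ j) := mul_le_mul_of_nonneg_right hc (by positivity)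
      _ = _ := by ring

theorem tendsto_one_div_mul_natCast_add {a : ℝ} (ha : 0 < a) (c : ℝ) :
    Tendsto (fun n : ℕ ↦ 1 / (a * n + c)) atTop (𝓝 0) := by
  simpa only [one_div, Pi.inv_def] using (tendsto_atTop_add_const_right _ c
    (tendsto_natCast_atTop_atTop.const_mul_atTop ha)).inv_tendsto_atTop

noncomputable def stirlingError (n : ℕ) : ℝ := log (stirlingSeq n) - log √π

theorem log_factorial_eq {n : ℕ} (hn : n ≠ 0) :
    log n ! = stirlingError n + log π / 2 + (log 2 + log n) / 2 + n * log n - n := by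
  have hn' : (n : ℝ) ≠ 0 := Nat.cast_ne_zero.mpr hn
  rw [stirlingError, log_stirlingSeq_formula, log_sqrt pi_pos.le, log_mul two_ne_zero hn',
    log_div hn' (exp_ne_zero 1), log_exp]
  ring

theorem tendsto_stirlingError : Tendsto stirlingError atTop (𝓝 0) := by
  rw [← sub_self (log √π)]
  exact ((continuousAt_log (sqrt_pos.mpr pi_pos).ne').tendsto.comp
    tendsto_stirlingSeq_sqrt_pi).sub_const _

theorem tendsto_stirlingError_succ_sub (c : ℝ) :
    Tendsto (fun n : ℕ ↦ stirlingError (n + 1) - 1 / (12 * (n + 1 : ℕ) + c)) atTop (𝓝 0) := by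
  simpa only [sub_zero, Function.comp_def] using
    (tendsto_stirlingError.sub (tendsto_one_div_mul_natCast_add (by norm_num) c)).comp
      (tendsto_add_atTop_nat 1)

theorem le_log_stirlingSeq_sdiff {n : ℕ} (hn : n ≠ 0) :
    1 / (12 * n + 1) - 1 / (12 * (n + 1 : ℕ) + 1) ≤
      log (stirlingSeq n) - log (stirlingSeq (n + 1)) := by
  obtain ⟨n, rfl⟩ := Nat.exists_eq_succ_of_ne_zero hn
  refine le_trans ?_ (le_hasSum (log_stirlingSeq_sdiff_hasSum n) 0 fun _ _ ↦ by positivity)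
  rw [div_sub_div _ _ (by positivity) (by positivity), div_le_iff₀ (by positivity)]
  push_cast
  field_simp
  nlinarith [n.cast_nonneg (α := ℝ)]

theorem stirlingError_le {n : ℕ} (hn : n ≠ 0) : stirlingError n ≤ 1 / (12 * n) := by
  obtain ⟨n, rfl⟩ := Nat.exists_eq_succ_of_ne_zero hn
  have mono : Monotone fun n : ℕ ↦ stirlingError (n + 1) - 1 / (12 * (n + 1 : ℕ) + 0) := by
    refine monotone_nat_of_le_succ fun n ↦ ?_
    have step := log_stirlingSeq_sdiff_le (n + 1)
    have split : 1 / (12 * (n + 1 : ℕ) * ((n + 1 : ℕ) + 1) : ℝ) =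
        1 / (12 * (n + 1 : ℕ)) - 1 / (12 * (n + 1 + 1 : ℕ)) := by
      push_cast; field_simp; ring
    simp only [stirlingError, add_zero]
    linarith
  simpa using mono.ge_of_tendsto (tendsto_stirlingError_succ_sub 0) n

theorem le_stirlingError {n : ℕ} (hn : n ≠ 0) : 1 / (12 * n + 1) ≤ stirlingError n := by
  obtain ⟨n, rfl⟩ := Nat.exists_eq_succ_of_ne_zero hn
  have anti : Antitone fun n : ℕ ↦ stirlingError (n + 1) - 1 / (12 * (n + 1 : ℕ) + 1) := by
    refine antitone_nat_of_succ_le fun n ↦ ?_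
    have step := le_log_stirlingSeq_sdiff n.succ_ne_zero
    simp only [stirlingError]
    linarith
  simpa using anti.le_of_tendsto (tendsto_stirlingError_succ_sub 1) n

theorem log_Gamma_natCast {k : ℕ} (hk : k ≠ 0) : log (Gamma k) = log k ! - log k := by
  have hk' : (k : ℝ) ≠ 0 := Nat.cast_ne_zero.mpr hk
  rw [← Gamma_nat_eq_factorial, Gamma_add_one hk',
    log_mul hk' (Gamma_pos_of_pos (by positivity)).ne']
  ring

theorem log_Gamma_natCast_add_half (k : ℕ) :
    log (Gamma (k + 1 / 2)) = log (2 * k)! - log k ! - 2 * k * log 2 + log π / 2 := by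
  have dup := Gamma_mul_Gamma_add_half (k + 1 / 2)
  rw [show (k : ℝ) + 1 / 2 + 1 / 2 = k + 1 by ring,
    show 2 * ((k : ℝ) + 1 / 2) = (2 * k : ℕ) + 1 by push_cast; ring,
    Gamma_nat_eq_factorial, Gamma_nat_eq_factorial] at dup
  have := congrArg log dup
  rw [log_mul (Gamma_pos_of_pos (by positivity)).ne' (by positivity),
    log_mul (by positivity) (sqrt_pos.mpr pi_pos).ne', log_mul (by positivity) (by positivity),
    log_rpow two_pos, log_sqrt pi_pos.le] at this
  push_cast at this
  linarith

theorem gaussRadialMax_pos {m : ℕ} (hm : 2 ≤ m) : 0 < gaussRadialMax m := by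
  have hm' : (2 : ℝ) ≤ m := by exact_mod_cast hm
  have := Gamma_pos_of_pos (show (0 : ℝ) < m / 2 by positivity)
  have := rpow_pos_of_pos (show (0 : ℝ) < m - 1 by linarith) ((m - 1) / 2)
  unfold gaussRadialMax
  positivity

theorem log_gaussRadialMax {m : ℕ} (hm : 2 ≤ m) :
    log (gaussRadialMax m) = (2 - m) / 2 * log 2 - log (Gamma (m / 2)) +
      (m - 1) / 2 * log (m - 1) - (m - 1) / 2 := by
  have hm' : (0 : ℝ) < m - 1 := by
    have : (2 : ℝ) ≤ m := by exact_mod_cast hm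
    linarith
  have := Gamma_pos_of_pos (show (0 : ℝ) < m / 2 by positivity)
  rw [gaussRadialMax, log_mul (by positivity) (exp_pos _).ne',
    log_mul (by positivity) (rpow_pos_of_pos hm' _).ne', log_div (by positivity) this.ne',
    log_rpow two_pos, log_rpow hm', log_exp]
  ring

theorem log_gaussRadialMax_two_mul {k : ℕ} (hk : k ≠ 0) :
    log (gaussRadialMax (2 * k)) = -(log π / 2) + 1 / 2 -
      (2 * k - 1) / 2 * log (1 + (2 * k - 1 : ℝ)⁻¹) - stirlingError k := by
  have hk1 : (1 : ℝ) ≤ k := by exact_mod_cast Nat.one_le_iff_ne_zero.mpr hk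
  have hpos : (0 : ℝ) < 2 * k - 1 := by linarith
  have hlog : log (1 + (2 * k - 1 : ℝ)⁻¹) = log 2 + log k - log (2 * k - 1) := by
    rw [show 1 + (2 * k - 1 : ℝ)⁻¹ = 2 * k / (2 * k - 1) by field_simp [hpos.ne']; ring,
      log_div (by positivity) hpos.ne', log_mul two_ne_zero (by positivity)]
  rw [log_gaussRadialMax (by omega), hlog, show ((2 * k : ℕ) : ℝ) / 2 = k by push_cast; ring,
    log_Gamma_natCast hk, log_factorial_eq hk]
  push_cast
  ring

theorem log_gaussRadialMax_two_mul_add_one {k : ℕ} (hk : k ≠ 0) :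
    log (gaussRadialMax (2 * k + 1)) =
      -(log π / 2) + stirlingError k - stirlingError (2 * k) := by
  have hk0 : (0 : ℝ) < k := by exact_mod_cast Nat.pos_of_ne_zero hk
  rw [log_gaussRadialMax (by omega),
    show ((2 * k + 1 : ℕ) : ℝ) / 2 = k + 1 / 2 by push_cast; ring,
    log_Gamma_natCast_add_half, log_factorial_eq hk, log_factorial_eq (by omega)]
  push_cast
  rw [show (2 * k + 1 - 1 : ℝ) = 2 * k by ring, log_mul two_ne_zero hk0.ne']
  ring

theorem gaussRadialMax_two_mul_add_one_le {k : ℕ} (hk : k ≠ 0) :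
    gaussRadialMax (2 * k + 1) ≤ gaussRadialMax (2 * k) := by
  have hk1 : (1 : ℝ) ≤ k := by exact_mod_cast Nat.one_le_iff_ne_zero.mpr hk
  have ha : (0 : ℝ) < 2 * k - 1 := by linarith
  rw [← log_le_log_iff (gaussRadialMax_pos (by omega)) (gaussRadialMax_pos (by omega)),
    log_gaussRadialMax_two_mul_add_one hk, log_gaussRadialMax_two_mul hk]
  have hεk := stirlingError_le hk
  have hε2k := le_stirlingError (show 2 * k ≠ 0 by omega)
  have hlog := mul_le_mul_of_nonneg_left (log_one_add_inv_le ha)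
    (by linarith : (0 : ℝ) ≤ (2 * k - 1) / 2)
  have key : 2 * (1 / (12 * (k : ℝ))) - 1 / (12 * (2 * k) + 1) + (2 * k - 1) / 2 *
      (2 / (2 * (2 * k - 1) + 1) + 1 / (6 * (2 * k - 1) * (2 * k - 1 + 1) * (2 * (2 * k - 1) + 1)))
        ≤ 1 / 2 := by
    have hk0 : (0 : ℝ) < k := by linarith
    field_simp
    nlinarith [pow_pos hk0 2, pow_pos hk0 3, pow_pos hk0 4, pow_pos hk0 5]
  push_cast at hε2k
  linarith

theorem gaussRadialMax_two_mul_add_two_le {k : ℕ} (hk : k ≠ 0) :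
    gaussRadialMax (2 * k + 2) ≤ gaussRadialMax (2 * k + 1) := by
  have hk1 : (1 : ℝ) ≤ k := by exact_mod_cast Nat.one_le_iff_ne_zero.mpr hk
  rw [← log_le_log_iff (gaussRadialMax_pos (by omega)) (gaussRadialMax_pos (by omega)),
    show 2 * k + 2 = 2 * (k + 1) by ring, log_gaussRadialMax_two_mul (by omega : k + 1 ≠ 0),
    log_gaussRadialMax_two_mul_add_one hk]
  push_cast
  rw [show 2 * ((k : ℝ) + 1) - 1 = 2 * k + 1 by ring]
  have hεk := le_stirlingError hk
  have hεk1 := le_stirlingError (by omega : k + 1 ≠ 0)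
  have hε2k := stirlingError_le (show 2 * k ≠ 0 by omega)
  have hlog := mul_le_mul_of_nonneg_left (le_log_one_add_inv (by linarith : (0 : ℝ) < 2 * k + 1))
    (by linarith : (0 : ℝ) ≤ (2 * k + 1) / 2)
  have key : 1 / 2 - (2 * (k : ℝ) + 1) / 2 *
      (2 / (2 * (2 * k + 1) + 1) + 2 / (3 * (2 * (2 * k + 1) + 1) ^ 3)) + 1 / (12 * (2 * k)) ≤
        1 / (12 * k + 1) + 1 / (12 * (k + 1) + 1) := by
    have hk0 : (0 : ℝ) < k := by linarith
    field_simp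
    nlinarith [pow_pos hk0 2, pow_pos hk0 3, pow_pos hk0 4, pow_pos hk0 5, pow_pos hk0 6,
      pow_pos hk0 7]
  push_cast at hεk1 hε2k
  linarith

theorem gaussRadialMax_succ_le {m : ℕ} (hm : 2 ≤ m) :
    gaussRadialMax (m + 1) ≤ gaussRadialMax m := by
  obtain ⟨k, rfl | rfl⟩ := Nat.even_or_odd' m
  · exact gaussRadialMax_two_mul_add_one_le (by omega)
  · exact gaussRadialMax_two_mul_add_two_le (by omega)

theorem abs_log_gaussRadialMax_two_mul_add_le {k : ℕ} (hk : k ≠ 0) :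
    |log (gaussRadialMax (2 * k)) + log π / 2| ≤ 1 / (2 * k) := by
  have hk1 : (1 : ℝ) ≤ k := by exact_mod_cast Nat.one_le_iff_ne_zero.mpr hk
  have ha : (0 : ℝ) < 2 * k - 1 := by linarith
  have hε := stirlingError_le hk
  have hε' : 0 < stirlingError k := lt_of_lt_of_le (by positivity) (le_stirlingError hk)
  have hlog_le : (2 * k - 1) * log (1 + (2 * k - 1 : ℝ)⁻¹) ≤ 1 := by
    have := mul_le_mul_of_nonneg_left (log_le_sub_one_of_pos
      (show (0 : ℝ) < 1 + (2 * k - 1 : ℝ)⁻¹ by positivity)) ha.le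
    rwa [add_sub_cancel_left, mul_inv_cancel₀ ha.ne'] at this
  have hlog_ge := mul_le_mul_of_nonneg_left ((le_add_of_nonneg_right (by positivity)).trans
    (le_log_one_add_inv ha)) (by linarith : (0 : ℝ) ≤ (2 * k - 1) / 2)
  have key : 1 / 2 - (2 * k - 1) / 2 * (2 / (2 * (2 * k - 1) + 1)) ≤ 1 / (2 * (k : ℝ)) := by
    field_simp
    nlinarith
  have hε_le : 1 / (12 * (k : ℝ)) ≤ 1 / (2 * k) :=
    one_div_le_one_div_of_le (by positivity) (by linarith)
  rw [log_gaussRadialMax_two_mul hk, abs_le]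
  constructor <;> linarith

theorem abs_log_gaussRadialMax_two_mul_add_one_add_le {k : ℕ} (hk : k ≠ 0) :
    |log (gaussRadialMax (2 * k + 1)) + log π / 2| ≤ 1 / (2 * k + 1) := by
  have hk1 : (1 : ℝ) ≤ k := by exact_mod_cast Nat.one_le_iff_ne_zero.mpr hk
  have hεk := stirlingError_le hk
  have hεk' := le_stirlingError hk
  have hε2k := stirlingError_le (show 2 * k ≠ 0 by omega)
  have hε2k' := le_stirlingError (show 2 * k ≠ 0 by omega)
  push_cast at hε2k hε2k'
  have h₁ : 1 / (12 * (k : ℝ)) ≤ 1 / (2 * k + 1) :=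
    one_div_le_one_div_of_le (by positivity) (by linarith)
  have h₂ : 1 / (12 * (2 * k : ℝ)) ≤ 1 / (2 * k + 1) :=
    one_div_le_one_div_of_le (by positivity) (by linarith)
  have : (0 : ℝ) < 1 / (12 * k + 1) := by positivity
  have : (0 : ℝ) < 1 / (12 * (2 * k) + 1) := by positivity
  rw [log_gaussRadialMax_two_mul_add_one hk, abs_le]
  constructor <;> linarith

theorem abs_log_gaussRadialMax_add_le {m : ℕ} (hm : 2 ≤ m) :
    |log (gaussRadialMax m) + log π / 2| ≤ 1 / m := by
  obtain ⟨k, rfl | rfl⟩ := Nat.even_or_odd' m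
  · exact_mod_cast abs_log_gaussRadialMax_two_mul_add_le (by omega : k ≠ 0)
  · exact_mod_cast abs_log_gaussRadialMax_two_mul_add_one_add_le (by omega : k ≠ 0)

theorem tendsto_gaussRadialMax : Tendsto gaussRadialMax atTop (𝓝 (1 / √π)) := by
  have hlog : Tendsto (fun m ↦ log (gaussRadialMax m)) atTop (𝓝 (-(log π / 2))) := by
    rw [tendsto_iff_norm_sub_tendsto_zero]
    refine squeeze_zero' (.of_forall fun _ ↦ norm_nonneg _) ?_ tendsto_one_div_atTop_nhds_zero_nat
    filter_upwards [eventually_ge_atTop 2] with m hm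
    simpa only [Real.norm_eq_abs, sub_neg_eq_add] using abs_log_gaussRadialMax_add_le hm
  have hexp : exp (-(log π / 2)) = 1 / √π := by
    rw [← log_sqrt pi_pos.le, exp_neg, exp_log (sqrt_pos.mpr pi_pos), one_div]
  rw [← hexp]
  refine ((continuous_exp.tendsto _).comp hlog).congr' ?_
  filter_upwards [eventually_ge_atTop 2] with m hm
  exact exp_log (gaussRadialMax_pos hm)

theorem gaussRadialMax_antitone_tendsto :
    (∀ m : ℕ, 2 ≤ m → gaussRadialMax (m + 1) ≤ gaussRadialMax m) ∧
    Tendsto gaussRadialMax atTop (nhds (1 / Real.sqrt Real.pi)) :=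
  ⟨fun _ ↦ gaussRadialMax_succ_le, tendsto_gaussRadialMax⟩
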